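/- arXiv:1412.4146 — 3 statements merged into one kernel-verified Lean document; each statement's English description precedes it below -/
import Mathlib

section
/- (Fundamental theorem of linear inequalities.) Let v : Fin K → ℝ^m be a finite family of vectors whose span is all of ℝ^m, and let u ∈ ℝ^m. Then exactly one of the following two statements holds: (i) u lies in the conical hull of {v_k}, i.e. u = Σ_k c_k · v_k for some nonnegative reals c_k; (ii) there exists a vector n ∈ ℝ^m and a subset s of indices of cardinality m − 1 such that the family (v_k)_{k ∈ s} is linearly independent, ⟪n, v_k⟫ = 0 for all k ∈ s, ⟪n, u⟫ > 0, and ⟪n, v_k⟫ ≤ 0 for all k. -/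
/-!
By Carathéodory's theorem for cones, the cone generated by the `v k` is a finite union of cones
over linearly independent subfamilies, hence closed, and separating `u` from it (Farkas) gives a
functional `f` with `f (v k) ≤ 0` for all `k` and `f u > 0`. Among such functionals with the same
value at `u`, pick one whose set of active indices `{k | f (v k) = 0}` is maximal. Were the active
vectors to span less than a hyperplane, some nonzero `w` would vanish on them and on `u`, and a
ratio test would give `t` such that `f + t • w` keeps all constraints and activates one more
index. So the active vectors span a hyperplane, and a basis of it chosen among them is `s`.
-/

open Set Module Function Submodule

variable {ι E : Type*}

theorem exists_mul_le_and_eq_of_nonneg [Finite ι] {a b : ι → ℝ} (ha : ∀ i, 0 ≤ a i)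
    (hb : ∃ i, 0 < b i) : ∃ t : ℝ, (∀ i, t * b i ≤ a i) ∧ ∃ i, 0 < b i ∧ t * b i = a i := by
  have := Fintype.ofFinite ι
  classical
  obtain ⟨i₀, hi₀, hmin⟩ := (Finset.univ.filter (0 < b ·)).exists_min_image (fun i => a i / b i)
    (let ⟨i, hi⟩ := hb; ⟨i, by simpa using hi⟩)
  rw [Finset.mem_filter] at hi₀
  refine ⟨a i₀ / b i₀, fun i => ?_, i₀, hi₀.2, div_mul_cancel₀ _ hi₀.2.ne'⟩
  rcases le_or_gt (b i) 0 with hbi | hbi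
  · exact (mul_nonpos_of_nonneg_of_nonpos (div_nonneg (ha i₀) hi₀.2.le) hbi).trans (ha i)
  · exact (le_div_iff₀ hbi).1 (hmin i (by simpa using hbi))

section Module

variable [AddCommGroup E] [Module ℝ E] [Fintype ι]

theorem exists_nonneg_linearIndepOn_support (v : ι → E) {c : ι → ℝ} (hc : ∀ i, 0 ≤ c i) :
    ∃ c' : ι → ℝ, (∀ i, 0 ≤ c' i) ∧ LinearIndepOn ℝ v (support c') ∧
      ∑ i, c' i • v i = ∑ i, c i • v i := by
  obtain ⟨c', ⟨hc'0, hc'v⟩, hmin⟩ := (measure fun c : ι → ℝ => (support c).ncard).wf.has_min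
    {c' | (∀ i, 0 ≤ c' i) ∧ ∑ i, c' i • v i = ∑ i, c i • v i} ⟨c, hc, rfl⟩
  refine ⟨c', hc'0, by_contra fun hli => ?_, hc'v⟩
  obtain ⟨d, hdsupp, hdv, hd0⟩ :
      ∃ d : ι → ℝ, support d ⊆ support c' ∧ ∑ i, d i • v i = 0 ∧ d ≠ 0 := by
    obtain ⟨l, hl, hlv, hl0⟩ := linearDepOn_iff'.1 hli
    refine ⟨l, by simpa [Finsupp.fun_support_eq] using (Finsupp.mem_supported ℝ l).1 hl, ?_,
      DFunLike.coe_injective.ne hl0⟩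
    rwa [Finsupp.linearCombination_apply, Finsupp.sum_fintype _ _ (by simp)] at hlv
  wlog hpos : ∃ i, 0 < d i generalizing d
  · obtain ⟨i, hi⟩ := Function.ne_iff.1 hd0
    refine this (-d) (by rwa [support_neg]) (by simp [hdv]) (neg_ne_zero.2 hd0)
      ⟨i, neg_pos.2 (lt_of_le_of_ne (not_lt.1 fun h => hpos ⟨i, h⟩) hi)⟩
  obtain ⟨t, hle, j, hj, heq⟩ := exists_mul_le_and_eq_of_nonneg hc'0 hpos
  refine hmin (c' - t • d) ⟨fun i => sub_nonneg.2 (hle i), ?_⟩ (ncard_lt_ncard ?_ (toFinite _))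
  · simp only [Pi.sub_apply, Pi.smul_apply, smul_eq_mul, sub_smul, mul_smul,
      Finset.sum_sub_distrib, ← Finset.smul_sum, hdv, smul_zero, sub_zero, hc'v]
  · refine (ssubset_iff_of_subset fun i hi => by_contra fun hci => mem_support.1 hi ?_).2
      ⟨j, hdsupp hj.ne', by simp [heq]⟩
    simp [notMem_support.1 hci, notMem_support.1 fun h => hci (hdsupp h)]

namespace PointedCone

theorem mem_hull_range_iff {v : ι → E} {x : E} :
    x ∈ hull ℝ (range v) ↔ ∃ c : ι → ℝ, (∀ i, 0 ≤ c i) ∧ ∑ i, c i • v i = x := by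
  rw [Submodule.mem_span_range_iff_exists_fun]
  constructor
  · rintro ⟨c, rfl⟩
    exact ⟨fun i => c i, fun i => (c i).2, rfl⟩
  · rintro ⟨c, hc, rfl⟩
    exact ⟨fun i => ⟨c i, hc i⟩, rfl⟩

theorem apply_nonpos_of_mem_hull {s : Set E} {f : E →ₗ[ℝ] ℝ} (hf : ∀ x ∈ s, f x ≤ 0) {x : E}
    (hx : x ∈ hull ℝ s) : f x ≤ 0 := by
  induction hx using Submodule.span_induction with
  | mem x hx => exact hf x hx
  | zero => simp
  | add x y _ _ hx hy => simpa using add_nonpos hx hy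
  | smul c x _ hx =>
    rw [LinearMap.map_smul_of_tower]
    exact mul_nonpos_of_nonneg_of_nonpos c.2 hx

theorem coe_hull_range_eq_biUnion (v : ι → E) :
    (hull ℝ (range v) : Set E) = ⋃ s ∈ {s : Set ι | LinearIndepOn ℝ v s}, hull ℝ (v '' s) := by
  ext x
  simp only [mem_iUnion, SetLike.mem_coe, mem_ofPred_eq, exists_prop]
  constructor
  · intro hx
    obtain ⟨c, hc, rfl⟩ := mem_hull_range_iff.1 hx
    obtain ⟨c', hc'0, hli, hc'⟩ := exists_nonneg_linearIndepOn_support v hc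
    refine ⟨_, hli, hc' ▸ Submodule.sum_mem _ fun i _ => ?_⟩
    by_cases hi : c' i = 0
    · simp [hi]
    · exact smul_mem _ (hc'0 i) (subset_hull (mem_image_of_mem v hi))
  · rintro ⟨s, -, hx⟩
    exact Submodule.span_mono (image_subset_range v s) hx

end PointedCone

end Module

namespace PointedCone

variable [AddCommGroup E] [Module ℝ E] [TopologicalSpace E] [IsTopologicalAddGroup E]
  [ContinuousSMul ℝ E] [T2Space E]

theorem isClosed_hull_range_of_linearIndependent {κ : Type*} [Finite κ] {w : κ → E}
    (hw : LinearIndependent ℝ w) : IsClosed (hull ℝ (range w) : Set E) := by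
  have := Fintype.ofFinite κ
  have himage : (hull ℝ (range w) : Set E) = Fintype.linearCombination ℝ w '' Ici 0 := by
    ext x
    simp [mem_hull_range_iff, Fintype.linearCombination_apply, Pi.le_def]
  rw [himage]
  exact (LinearMap.isClosedEmbedding_of_injective (LinearMap.ker_eq_bot.2
    hw.fintypeLinearCombination_injective)).isClosedMap _ isClosed_Ici

theorem isClosed_hull_range [Finite ι] (v : ι → E) : IsClosed (hull ℝ (range v) : Set E) := by
  have := Fintype.ofFinite ι
  rw [coe_hull_range_eq_biUnion]
  exact (toFinite _).isClosed_biUnion fun s hs => by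
    rw [image_eq_range]
    exact isClosed_hull_range_of_linearIndependent hs

theorem exists_strongDual_pos_of_notMem_hull_range [LocallyConvexSpace ℝ E] [Finite ι]
    {v : ι → E} {u : E} (hu : u ∉ hull ℝ (range v)) :
    ∃ f : StrongDual ℝ E, (∀ i, f (v i) ≤ 0) ∧ 0 < f u := by
  obtain ⟨f, hC, hfu⟩ :=
    ProperCone.hyperplane_separation_point ⟨hull ℝ (range v), isClosed_hull_range v⟩ hu
  exact ⟨-f, fun i => neg_nonpos.2 (hC _ (subset_hull (mem_range_self i))), neg_pos.2 hfu⟩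

end PointedCone

theorem exists_finset_linearIndepOn_card_eq_finrank (K : Type*) [DivisionRing K] [AddCommGroup E]
    [Module K E] [Finite ι] (v : ι → E) (A : Set ι) :
    ∃ s : Finset ι, ↑s ⊆ A ∧ LinearIndepOn K v s ∧ s.card = finrank K (span K (v '' A)) := by
  obtain ⟨b, hbA, -, hAb, hli⟩ :=
    exists_linearIndepOn_extension (linearIndepOn_empty K v) (empty_subset A)
  lift b to Finset ι using toFinite b
  refine ⟨b, hbA, hli, ?_⟩
  have hspan : span K (v '' A) = span K (v '' b) :=
    le_antisymm (span_le.2 hAb) (span_mono (image_mono hbA))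
  rw [hspan, image_eq_range, finrank_span_eq_card hli]
  simp

section Dual

variable [AddCommGroup E] [Module ℝ E] [FiniteDimensional ℝ E] [Finite ι] {v : ι → E}

theorem exists_dual_setOf_apply_eq_zero_ssubset (hspan : span ℝ (range v) = ⊤) {f : Dual ℝ E}
    (hf : ∀ i, f (v i) ≤ 0) (u : E)
    (hdim : finrank ℝ (span ℝ (v '' {i | f (v i) = 0})) + 1 < finrank ℝ E) :
    ∃ g : Dual ℝ E, (∀ i, g (v i) ≤ 0) ∧ g u = f u ∧ {i | f (v i) = 0} ⊂ {i | g (v i) = 0} := by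
  set A := {i | f (v i) = 0}
  set W := span ℝ (v '' A) ⊔ span ℝ {u}
  have hW : W ≠ ⊤ := by
    have hu : finrank ℝ (span ℝ {u}) ≤ 1 := by simpa using finrank_span_le_card (R := ℝ) {u}
    have hlt : finrank ℝ W < finrank ℝ E :=
      (finrank_add_le_finrank_add_finrank _ _).trans_lt (by omega)
    exact fun h => by rw [h, finrank_top] at hlt; exact hlt.false
  obtain ⟨j, hj⟩ : ∃ j, v j ∉ W := by
    by_contra! h
    exact hW (eq_top_iff.2 (hspan ▸ span_le.2 (range_subset_iff.2 h)))
  obtain ⟨w, hwj, hwW⟩ := W.exists_dual_map_eq_bot_of_notMem hj inferInstance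
  replace hwW : ∀ x ∈ W, w x = 0 := fun x hx => LinearMap.le_ker_iff_map.2 hwW hx
  wlog hpos : 0 < w (v j) generalizing w
  · exact this (-w) (by simpa using hwj) (fun x hx => by simp [hwW x hx])
      (by simpa using lt_of_le_of_ne (not_lt.1 hpos) hwj)
  obtain ⟨t, hle, k, hk, heq⟩ := exists_mul_le_and_eq_of_nonneg (a := fun i => -f (v i))
    (b := fun i => w (v i)) (fun i => neg_nonneg.2 (hf i)) ⟨j, hpos⟩
  have hwA : ∀ i ∈ A, w (v i) = 0 :=
    fun i hi => hwW _ (mem_sup_left (subset_span (mem_image_of_mem v hi)))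
  refine ⟨f + t • w, fun i => ?_, ?_, (ssubset_iff_of_subset fun i hi => ?_).2
    ⟨k, ?_, fun hkA => hk.ne' (hwA k hkA)⟩⟩
  · simp only [LinearMap.add_apply, LinearMap.smul_apply, smul_eq_mul]
    linarith [hle i]
  · simp [hwW u (mem_sup_right (mem_span_singleton_self u))]
  · simp [show f (v i) = 0 from hi, hwA i hi]
  · simp only [mem_ofPred_eq, LinearMap.add_apply, LinearMap.smul_apply, smul_eq_mul]
    linarith

end Dual

section Normed

variable [NormedAddCommGroup E] [NormedSpace ℝ E] [FiniteDimensional ℝ E] [Finite ι] {v : ι → E}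

theorem exists_dual_of_notMem_hull_range (hspan : span ℝ (range v) = ⊤) {u : E}
    (hu : u ∉ PointedCone.hull ℝ (range v)) :
    ∃ f : Dual ℝ E, ∃ s : Finset ι, s.card = finrank ℝ E - 1 ∧ LinearIndepOn ℝ v s ∧
      (∀ i ∈ s, f (v i) = 0) ∧ 0 < f u ∧ ∀ i, f (v i) ≤ 0 := by
  obtain ⟨f₀, hf₀v, hf₀u⟩ := PointedCone.exists_strongDual_pos_of_notMem_hull_range hu
  obtain ⟨f, ⟨hfv, hfu⟩, hmax⟩ := (toFinite _).exists_maximalFor'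
    (fun f : Dual ℝ E => {i | f (v i) = 0}) {f | (∀ i, f (v i) ≤ 0) ∧ f u = f₀ u}
    ⟨f₀, hf₀v, rfl⟩
  set A := {i | f (v i) = 0}
  have hfu' : 0 < f u := hfu ▸ hf₀u
  have hlt : finrank ℝ (span ℝ (v '' A)) < finrank ℝ E :=
    Submodule.finrank_lt (ne_top_of_le_ne_top (b := LinearMap.ker f)
      (fun h => hfu'.ne' (by rw [LinearMap.ker_eq_top.1 h]; rfl))
      (span_le.2 (image_subset_iff.2 fun _ hi => LinearMap.mem_ker.2 hi)))
  have hge : ¬ finrank ℝ (span ℝ (v '' A)) + 1 < finrank ℝ E := fun h => by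
    obtain ⟨g, hgv, hgu, hAg⟩ := exists_dual_setOf_apply_eq_zero_ssubset hspan hfv u h
    exact hAg.not_subset (hmax ⟨hgv, hgu.trans hfu⟩ hAg.subset)
  obtain ⟨s, hsA, hli, hcard⟩ := exists_finset_linearIndepOn_card_eq_finrank ℝ v A
  exact ⟨f, s, by omega, hli, fun i hi => hsA hi, hfu', hfv⟩

theorem xor_mem_hull_range_or_exists_dual (hspan : span ℝ (range v) = ⊤) (u : E) :
    Xor (u ∈ PointedCone.hull ℝ (range v))
      (∃ f : Dual ℝ E, ∃ s : Finset ι, s.card = finrank ℝ E - 1 ∧ LinearIndepOn ℝ v s ∧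
        (∀ i ∈ s, f (v i) = 0) ∧ 0 < f u ∧ ∀ i, f (v i) ≤ 0) :=
  xor_iff_iff_not.2 ⟨fun hu ⟨_, _, _, _, _, hfu, hfv⟩ =>
    (PointedCone.apply_nonpos_of_mem_hull (forall_mem_range.2 hfv) hu).not_gt hfu,
    fun h => by_contra fun hu => h (exists_dual_of_notMem_hull_range hspan hu)⟩

end Normed

/-- Fundamental theorem of linear inequalities: for a finite family `v` spanning `ℝ^m` and a
vector `u`, exactly one of the following holds: (i) `u` lies in the conical hull of the `v k`;
(ii) there is a hyperplane with normal `n` containing `m - 1` linearly independent vectors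
among the `v k`, with `⟪n, u⟫ > 0` and `⟪n, v k⟫ ≤ 0` for all `k`. -/
theorem stmt_10 {m K : ℕ} (v : Fin K → Fin m → ℝ)
    (hspan : Submodule.span ℝ (Set.range v) = ⊤) (u : Fin m → ℝ) :
    Xor'
      (∃ c : Fin K → ℝ, (∀ k, 0 ≤ c k) ∧ u = ∑ k, c k • v k)
      (∃ (n : Fin m → ℝ) (s : Finset (Fin K)), s.card = m - 1 ∧
        LinearIndependent ℝ (fun k : {k // k ∈ s} => v k) ∧
        (∀ k ∈ s, dotProduct n (v k) = 0) ∧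
        0 < dotProduct n u ∧
        ∀ k, dotProduct n (v k) ≤ 0) := by
  have key := xor_mem_hull_range_or_exists_dual hspan u
  rw [Module.finrank_fin_fun, PointedCone.mem_hull_range_iff,
    (dotProductEquiv ℝ (Fin m)).surjective.exists] at key
  simp only [@eq_comm _ u]
  exact key
end

section
/- Let v : Fin K → ℝ^m be a finite family of vectors whose span is all of ℝ^m. Then the conical hull cone({v_k}) equals all of ℝ^m if and only if for every vector n ∈ ℝ^m such that there exists a subset s of indices of cardinality m − 1 with (v_k)_{k ∈ s} linearly independent and ⟪n, v_k⟫ = 0 for all k ∈ s and n ≠ 0, the family of numbers (⟪n, v_k⟫)_{k} is neither all nonpositive nor all nonnegative, i.e. there exist indices k₁, k₂ with ⟪n, v_{k₁}⟫ > 0 and ⟪n, v_{k₂}⟫ < 0. -/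
/-!
If the cone is everything, then `n` and `-n` are nonnegative combinations of the `v k`, which
forces `⟪n, v k⟫` to take both signs. Conversely, if some `u` lies outside the cone, Farkas' lemma
(proved by eliminating one generator at a time) gives `n ≠ 0` with `⟪n, v k⟫ ≤ 0` for all `k`.
Such an `n` can be rotated until its hyperplane contains `m - 1` linearly independent `v k`:
while the `v k` on `n^⊥` span a subspace `F` with `dim F < m - 1`, choose `w ≠ 0` orthogonal to
`F` and to `n` with some `⟪w, v k⟫ > 0`, and replace `n` by `n + τ w` for the largest `τ` keeping
all `⟪·, v k⟫ ≤ 0` (the ratio test of the simplex method). Then `F` grows strictly, and the final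
`n` contradicts the hypothesis.
-/

open Matrix Module Submodule

variable {𝕜 ι : Type*} [Fintype ι]

section Field

variable [Field 𝕜] {κ : Type*}

lemma dotProduct_eq_zero_of_mem_span {s : Set (ι → 𝕜)} {n x : ι → 𝕜}
    (h : ∀ y ∈ s, n ⬝ᵥ y = 0) (hx : x ∈ span 𝕜 s) : n ⬝ᵥ x = 0 := by
  induction hx using Submodule.span_induction with
  | mem y hy => exact h y hy
  | zero => exact dotProduct_zero n
  | add x y _ _ hx hy => rw [dotProduct_add, hx, hy, add_zero]
  | smul a x _ hx => rw [dotProduct_smul, hx, smul_zero]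

lemma exists_ne_zero_forall_dotProduct_eq_zero {W : Submodule 𝕜 (ι → 𝕜)} (hW : W ≠ ⊤) :
    ∃ w ≠ 0, ∀ x ∈ W, w ⬝ᵥ x = 0 := by
  classical
  obtain ⟨f, hf, hWf⟩ := W.exists_dual_map_eq_bot_of_lt_top hW.lt_top inferInstance
  refine ⟨(dotProductEquiv 𝕜 ι).symm f, by simpa using hf, fun x hx => ?_⟩
  have hfx : f x ∈ W.map f := mem_map_of_mem hx
  rw [hWf, mem_bot] at hfx
  simpa [← dotProductEquiv_apply_apply] using hfx

lemma exists_linearIndependent_finset {V : Type*} [AddCommGroup V] [Module 𝕜 V] [Finite κ]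
    (v : κ → V) (A : Set κ) :
    ∃ s : Finset κ, ↑s ⊆ A ∧ s.card = finrank 𝕜 (span 𝕜 (v '' A)) ∧
      LinearIndependent 𝕜 (fun k : s => v k) := by
  obtain ⟨b, hbA, -, hAb, hb⟩ :=
    exists_linearIndepOn_extension (linearIndepOn_empty 𝕜 v) (Set.empty_subset A)
  obtain ⟨s, rfl⟩ := b.toFinite.exists_finset_coe
  have hspan : span 𝕜 (v '' s) = span 𝕜 (v '' A) :=
    le_antisymm (span_mono (Set.image_mono hbA)) (span_le.2 hAb)
  refine ⟨s, hbA, ?_, hb⟩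
  rw [← hspan, Set.image_eq_range, finrank_span_eq_card hb]
  simp

def faceSpan (v : κ → ι → 𝕜) (n : ι → 𝕜) : Submodule 𝕜 (ι → 𝕜) :=
  span 𝕜 (v '' {k | n ⬝ᵥ v k = 0})

lemma dotProduct_eq_zero_of_mem_faceSpan {v : κ → ι → 𝕜} {n x : ι → 𝕜}
    (hx : x ∈ faceSpan v n) : n ⬝ᵥ x = 0 :=
  dotProduct_eq_zero_of_mem_span (by rintro _ ⟨k, hk, rfl⟩; exact hk) hx

end Field

variable [Field 𝕜] [LinearOrder 𝕜] [IsStrictOrderedRing 𝕜]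

lemma dotProduct_self_pos {u : ι → 𝕜} (hu : u ≠ 0) : 0 < u ⬝ᵥ u :=
  (Finset.sum_nonneg fun i _ => mul_self_nonneg (u i)).lt_of_ne' (dotProduct_self_eq_zero.not.2 hu)

lemma eq_zero_of_forall_dotProduct_eq_zero {s : Set (ι → 𝕜)} (hs : span 𝕜 s = ⊤) {n : ι → 𝕜}
    (h : ∀ y ∈ s, n ⬝ᵥ y = 0) : n = 0 :=
  dotProduct_self_eq_zero.1 <| dotProduct_eq_zero_of_mem_span h (hs ▸ mem_top)

lemma dotProduct_nonpos_of_eq_sum_smul {κ : Type*} [Fintype κ] {v : κ → ι → 𝕜} {c : κ → 𝕜}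
    {n u : ι → 𝕜} (hc : ∀ k, 0 ≤ c k) (hu : u = ∑ k, c k • v k) (hn : ∀ k, n ⬝ᵥ v k ≤ 0) :
    n ⬝ᵥ u ≤ 0 := by
  rw [hu, dotProduct_sum]
  refine Finset.sum_nonpos fun k _ => ?_
  rw [dotProduct_smul, smul_eq_mul]
  exact mul_nonpos_of_nonneg_of_nonpos (hc k) (hn k)

theorem farkas_alternative {K : ℕ} (v : Fin K → ι → 𝕜) (u : ι → 𝕜) :
    (∃ c : Fin K → 𝕜, (∀ k, 0 ≤ c k) ∧ u = ∑ k, c k • v k) ∨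
      ∃ n : ι → 𝕜, (∀ k, n ⬝ᵥ v k ≤ 0) ∧ 0 < n ⬝ᵥ u := by
  induction K generalizing u with
  | zero =>
    rcases eq_or_ne u 0 with rfl | hu
    · exact .inl ⟨0, fun _ => le_rfl, by simp⟩
    · exact .inr ⟨u, finZeroElim, dotProduct_self_pos hu⟩
  | succ K ih =>
    set w := v (Fin.last K)
    rcases ih (fun k => v k.castSucc) u with ⟨c, hc, rfl⟩ | ⟨n, hn, hnu⟩
    · refine .inl ⟨Fin.snoc c 0, Fin.forall_fin_succ'.2 ⟨by simpa using hc, by simp⟩, ?_⟩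
      simp [Fin.sum_univ_castSucc]
    rcases le_or_gt (n ⬝ᵥ w) 0 with hw | hw
    · exact .inr ⟨n, Fin.forall_fin_succ'.2 ⟨hn, hw⟩, hnu⟩
    -- `P` projects along `w` onto `n^⊥`; recurse on the projected problem.
    let P (x : ι → 𝕜) := x - (n ⬝ᵥ x / n ⬝ᵥ w) • w
    rcases ih (fun k => P (v k.castSucc)) (P u) with ⟨c, hc, hPu⟩ | ⟨n', hn', hn'u⟩
    · set d := (n ⬝ᵥ u - ∑ k, c k * n ⬝ᵥ v k.castSucc) / n ⬝ᵥ w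
      have hd : 0 ≤ d := div_nonneg (sub_nonneg.2 <| (Finset.sum_nonpos fun k _ =>
        mul_nonpos_of_nonneg_of_nonpos (hc k) (hn k)).trans hnu.le) hw.le
      refine .inl ⟨Fin.snoc c d, Fin.forall_fin_succ'.2 ⟨by simpa using hc, by simpa using hd⟩, ?_⟩
      simp only [P, smul_sub, Finset.sum_sub_distrib, smul_smul, ← Finset.sum_smul] at hPu
      simp only [Fin.sum_univ_castSucc, Fin.snoc_castSucc, Fin.snoc_last, d, sub_div,
        Finset.sum_div, mul_div_assoc]
      linear_combination (norm := module) hPu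
    · have hP (x : ι → 𝕜) : (n' - (n' ⬝ᵥ w / n ⬝ᵥ w) • n) ⬝ᵥ x = n' ⬝ᵥ P x := by
        simp only [P, sub_dotProduct, dotProduct_sub, smul_dotProduct, dotProduct_smul, smul_eq_mul]
        ring
      have hPw : P w = 0 := by simp [P, div_self hw.ne']
      refine .inr ⟨n' - (n' ⬝ᵥ w / n ⬝ᵥ w) • n, Fin.forall_fin_succ'.2
        ⟨fun k => (hP _).trans_le (hn' k), (hP w).trans_le (by simp [hPw])⟩, (hP u).symm ▸ hn'u⟩

lemma exists_pos_ratio_test {κ : Type*} [Fintype κ] {a b : κ → 𝕜} (ha : ∀ k, a k ≤ 0)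
    (hab : ∀ k, 0 < b k → a k < 0) (hb : ∃ k, 0 < b k) :
    ∃ τ > 0, (∀ k, a k + τ * b k ≤ 0) ∧ ∃ k, 0 < b k ∧ a k + τ * b k = 0 := by
  classical
  obtain ⟨k₀, hk₀, hmin⟩ := Finset.exists_min_image {k | 0 < b k} (fun k => -a k / b k)
    (by simpa [Finset.Nonempty] using hb)
  rw [Finset.mem_filter_univ] at hk₀
  have hτ : 0 < -a k₀ / b k₀ := div_pos (neg_pos.2 (hab k₀ hk₀)) hk₀
  refine ⟨-a k₀ / b k₀, hτ, fun k => ?_, k₀, hk₀, ?_⟩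
  · rcases lt_or_ge 0 (b k) with hk | hk
    · have := (le_div_iff₀ hk).1 (hmin k (by simpa using hk))
      linarith
    · nlinarith [ha k]
  · field_simp
    ring

section Face

variable {κ : Type*} {v : κ → ι → 𝕜}

lemma faceSpan_ne_top {n : ι → 𝕜} (hn : n ≠ 0) : faceSpan v n ≠ ⊤ := fun h =>
  hn <| eq_zero_of_forall_dotProduct_eq_zero h fun _ hx =>
    dotProduct_eq_zero_of_mem_faceSpan (subset_span hx)

lemma exists_dotProduct_pos_of_ne_top (hspan : span 𝕜 (Set.range v) = ⊤)
    {W : Submodule 𝕜 (ι → 𝕜)} (hW : W ≠ ⊤) :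
    ∃ w : ι → 𝕜, (∀ x ∈ W, w ⬝ᵥ x = 0) ∧ ∃ k, 0 < w ⬝ᵥ v k := by
  obtain ⟨w, hw, hwW⟩ := exists_ne_zero_forall_dotProduct_eq_zero hW
  obtain ⟨k, hk⟩ : ∃ k, w ⬝ᵥ v k ≠ 0 := by
    by_contra! h
    exact hw <| eq_zero_of_forall_dotProduct_eq_zero hspan (by rintro _ ⟨k, rfl⟩; exact h k)
  rcases hk.lt_or_gt with hk | hk
  · exact ⟨-w, fun x hx => by simp [hwW x hx], k, by simpa using hk⟩
  · exact ⟨w, hwW, k, hk⟩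

variable [Fintype κ]

lemma exists_faceSpan_lt (hspan : span 𝕜 (Set.range v) = ⊤) {n : ι → 𝕜} (hn : n ≠ 0)
    (hnv : ∀ k, n ⬝ᵥ v k ≤ 0) (hr : finrank 𝕜 (faceSpan v n) + 1 < Fintype.card ι) :
    ∃ n' ≠ 0, (∀ k, n' ⬝ᵥ v k ≤ 0) ∧ faceSpan v n < faceSpan v n' := by
  have hW : faceSpan v n ⊔ span 𝕜 {n} ≠ ⊤ := by
    intro h
    have := finrank_add_le_finrank_add_finrank (faceSpan v n) (span 𝕜 {n})
    rw [h, finrank_top, finrank_fintype_fun_eq_card, finrank_span_singleton hn] at this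
    omega
  obtain ⟨w, hwW, k₀, hk₀⟩ := exists_dotProduct_pos_of_ne_top hspan hW
  have hwF (x) (hx : x ∈ faceSpan v n) : w ⬝ᵥ x = 0 := hwW x (mem_sup_left hx)
  have hwn : w ⬝ᵥ n = 0 := hwW n (mem_sup_right (mem_span_singleton_self n))
  obtain ⟨τ, -, hτv, k₁, hk₁w, hk₁⟩ := exists_pos_ratio_test hnv
    (fun k hk => (hnv k).lt_of_ne fun h0 => hk.ne' (hwF _ (subset_span ⟨k, h0, rfl⟩))) ⟨k₀, hk₀⟩
  have hdot (x : ι → 𝕜) : (n + τ • w) ⬝ᵥ x = n ⬝ᵥ x + τ * w ⬝ᵥ x := by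
    rw [add_dotProduct, smul_dotProduct, smul_eq_mul]
  refine ⟨n + τ • w, fun h => ?_, fun k => (hdot _).trans_le (hτv k),
    SetLike.lt_iff_le_and_exists.2 ⟨span_mono (Set.image_mono fun k hk => ?_),
      v k₁, subset_span ⟨k₁, (hdot _).trans hk₁, rfl⟩, fun h => hk₁w.ne' (hwF _ h)⟩⟩
  · have := hdot n
    rw [h, zero_dotProduct, hwn, mul_zero, add_zero] at this
    exact (dotProduct_self_pos hn).ne this
  · change _ = 0
    rw [hdot, hk, hwF _ (subset_span ⟨k, hk, rfl⟩), mul_zero, add_zero]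

lemma exists_finrank_faceSpan_eq (hspan : span 𝕜 (Set.range v) = ⊤) {n₀ : ι → 𝕜}
    (hn₀ : n₀ ≠ 0) (hv₀ : ∀ k, n₀ ⬝ᵥ v k ≤ 0) :
    ∃ n ≠ 0, (∀ k, n ⬝ᵥ v k ≤ 0) ∧ finrank 𝕜 (faceSpan v n) = Fintype.card ι - 1 := by
  induction hd : Fintype.card ι - finrank 𝕜 (faceSpan v n₀) using Nat.strong_induction_on
    generalizing n₀ with
  | _ d ih =>
  have hlt : finrank 𝕜 (faceSpan v n₀) < Fintype.card ι := by
    simpa using Submodule.finrank_lt (faceSpan_ne_top hn₀)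
  by_cases hr : finrank 𝕜 (faceSpan v n₀) + 1 < Fintype.card ι
  · obtain ⟨n, hn, hnv, hfn⟩ := exists_faceSpan_lt hspan hn₀ hv₀ hr
    have := Submodule.finrank_lt_finrank_of_lt hfn
    exact ih _ (by omega) hn hnv rfl
  · exact ⟨n₀, hn₀, hv₀, by omega⟩

lemma exists_facet_normal (hspan : span 𝕜 (Set.range v) = ⊤) {n₀ : ι → 𝕜} (hn₀ : n₀ ≠ 0)
    (hv₀ : ∀ k, n₀ ⬝ᵥ v k ≤ 0) :
    ∃ n ≠ 0, (∀ k, n ⬝ᵥ v k ≤ 0) ∧ ∃ s : Finset κ, s.card = Fintype.card ι - 1 ∧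
      LinearIndependent 𝕜 (fun k : s => v k) ∧ ∀ k ∈ s, n ⬝ᵥ v k = 0 := by
  obtain ⟨n, hn, hnv, hrank⟩ := exists_finrank_faceSpan_eq hspan hn₀ hv₀
  obtain ⟨s, hsF, hcard, hs⟩ := exists_linearIndependent_finset (𝕜 := 𝕜) v {k | n ⬝ᵥ v k = 0}
  exact ⟨n, hn, hnv, s, hcard.trans hrank, hs, fun k hk => hsF hk⟩

end Face

/-- For a finite family `v` spanning `ℝ^m`, the conical hull of the `v k` is all of `ℝ^m` iff
for every nonzero normal vector `n` of a hyperplane spanned by `m - 1` linearly independent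
vectors among the `v k`, the numbers `⟪n, v k⟫` are neither all nonpositive nor all
nonnegative. -/
theorem stmt_11 {m K : ℕ} (v : Fin K → Fin m → ℝ)
    (hspan : Submodule.span ℝ (Set.range v) = ⊤) :
    (∀ u : Fin m → ℝ, ∃ c : Fin K → ℝ, (∀ k, 0 ≤ c k) ∧ u = ∑ k, c k • v k) ↔
    (∀ n : Fin m → ℝ, n ≠ 0 →
      (∃ s : Finset (Fin K), s.card = m - 1 ∧
        LinearIndependent ℝ (fun k : {k // k ∈ s} => v k) ∧
        ∀ k ∈ s, dotProduct n (v k) = 0) →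
      (∃ k₁, 0 < dotProduct n (v k₁)) ∧
      (∃ k₂, dotProduct n (v k₂) < 0)) := by
  constructor
  · intro hcone n hn _
    have hpos (n' : Fin m → ℝ) (hn' : n' ≠ 0) : ∃ k, 0 < n' ⬝ᵥ v k := by
      by_contra! h
      obtain ⟨c, hc, hn'c⟩ := hcone n'
      exact (dotProduct_self_pos hn').not_ge (dotProduct_nonpos_of_eq_sum_smul hc hn'c h)
    obtain ⟨k₂, hk₂⟩ := hpos (-n) (neg_ne_zero.2 hn)
    exact ⟨hpos n hn, k₂, by simpa using hk₂⟩
  · intro hfacet u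
    refine (farkas_alternative v u).resolve_right ?_
    rintro ⟨n₀, hn₀v, hn₀u⟩
    have hn₀ : n₀ ≠ 0 := by rintro rfl; simp at hn₀u
    obtain ⟨n, hn, hnv, hs⟩ := exists_facet_normal hspan hn₀ hn₀v
    obtain ⟨⟨k, hk⟩, -⟩ := hfacet n hn (by simpa using hs)
    exact (hnv k).not_gt hk
end

section
/- Let ℛ be a linear map on N×N complex matrices, and let H, ρ, U, Λ : ℝ → Matrix(Fin N, Fin N, ℂ) be functions such that: Λ(t) is a diagonal matrix for every t; U(t) is unitary for every t; ρ(t) = U(t)·Λ(t)·U(t)† for every t; U and Λ are differentiable; there exists a Hermitian-valued function H'(t) with U'(t) = −i·H'(t)·U(t); H(t) is Hermitian for every t; and ρ satisfies the Lindblad-type equation ρ'(t) = −i·(H(t)·ρ(t) − ρ(t)·H(t)) + ℛ(ρ(t)) for every t. Then for all t and all indices k, the diagonal entries of the derivative of Λ satisfy (Λ'(t))_{kk} = (U(t)† · ℛ(U(t)·Λ(t)·U(t)†) · U(t))_{kk}; i.e. Λ'(t) equals the diagonal part of U(t)† · ℛ(ρ(t)) · U(t). -/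
open Matrix

/-!
Differentiating `ρ = U Λ Uᴴ` along `U' = -i H' U` gives `ρ' = -i [H', ρ] + U Λ' Uᴴ`. Comparing
with the Lindblad equation and conjugating by `U`,
`Λ' = Uᴴ ℛ(ρ) U - i Uᴴ [H - H', ρ] U`, and for every `A` the matrix `Uᴴ [A, ρ] U = [Uᴴ A U, Λ]`
has zero diagonal because `Λ` is diagonal.
-/

namespace Matrix

section EntrywiseDeriv

variable {𝕜 R l m n : Type*} [NontriviallyNormedField 𝕜]

def HasEntrywiseDerivAt [NormedAddCommGroup R] [NormedSpace 𝕜 R]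
    (A : 𝕜 → Matrix m n R) (A' : Matrix m n R) (x : 𝕜) : Prop :=
  ∀ i j, HasDerivAt (fun s => A s i j) (A' i j) x

theorem HasEntrywiseDerivAt.unique [NormedAddCommGroup R] [NormedSpace 𝕜 R]
    {A : 𝕜 → Matrix m n R} {A₁ A₂ : Matrix m n R} {x : 𝕜}
    (h₁ : HasEntrywiseDerivAt A A₁ x) (h₂ : HasEntrywiseDerivAt A A₂ x) : A₁ = A₂ :=
  ext fun i j => (h₁ i j).unique (h₂ i j)

theorem HasEntrywiseDerivAt.mul [Fintype m] [NormedRing R] [NormedAlgebra 𝕜 R]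
    {A : 𝕜 → Matrix l m R} {B : 𝕜 → Matrix m n R} {A' : Matrix l m R} {B' : Matrix m n R}
    {x : 𝕜} (hA : HasEntrywiseDerivAt A A' x) (hB : HasEntrywiseDerivAt B B' x) :
    HasEntrywiseDerivAt (fun s => A s * B s) (A' * B x + A x * B') x := fun i j => by
  simp only [mul_apply, add_apply, ← Finset.sum_add_distrib]
  exact HasDerivAt.fun_sum fun k _ => (hA i k).mul (hB k j)

theorem HasEntrywiseDerivAt.conjTranspose [StarRing 𝕜] [TrivialStar 𝕜] [NormedAddCommGroup R]
    [NormedSpace 𝕜 R] [StarAddMonoid R] [StarModule 𝕜 R] [ContinuousStar R]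
    {A : 𝕜 → Matrix m n R} {A' : Matrix m n R} {x : 𝕜} (hA : HasEntrywiseDerivAt A A' x) :
    HasEntrywiseDerivAt (fun s => (A s)ᴴ) A'ᴴ x :=
  fun i j => (hA j i).star

end EntrywiseDeriv

theorem IsDiag.commutator_apply_self {n R : Type*} [Fintype n] [DecidableEq n] [CommRing R]
    {Λ : Matrix n n R} (hΛ : Λ.IsDiag) (M : Matrix n n R) (k : n) :
    (M * Λ - Λ * M) k k = 0 := by
  rw [← hΛ.diagonal_diag, sub_apply, mul_diagonal, diagonal_mul, mul_comm, sub_self]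

theorem IsDiag.conjTranspose_mul_commutator_mul_apply_self {n R : Type*} [Fintype n]
    [DecidableEq n] [CommRing R] [StarRing R] {U Λ : Matrix n n R} (hU : Uᴴ * U = 1)
    (hΛ : Λ.IsDiag) (A : Matrix n n R) (k : n) :
    (Uᴴ * (A * (U * Λ * Uᴴ) - U * Λ * Uᴴ * A) * U) k k = 0 := by
  have : Uᴴ * (A * (U * Λ * Uᴴ) - U * Λ * Uᴴ * A) * U
      = Uᴴ * A * U * Λ - Λ * (Uᴴ * A * U) := by
    simp only [Matrix.mul_sub, Matrix.sub_mul, Matrix.mul_assoc, hU, Matrix.mul_one]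
    simp only [← Matrix.mul_assoc, hU, Matrix.one_mul]
  rw [this, hΛ.commutator_apply_self]

theorem HasEntrywiseDerivAt.conj_of_hamiltonian {n : Type*} [Fintype n]
    {U Λ : ℝ → Matrix n n ℂ} {H Λ' : Matrix n n ℂ} {x : ℝ}
    (hU : HasEntrywiseDerivAt U ((-Complex.I) • (H * U x)) x) (hH : Hᴴ = H)
    (hΛ : HasEntrywiseDerivAt Λ Λ' x) :
    HasEntrywiseDerivAt (fun s => U s * Λ s * (U s)ᴴ)
      ((-Complex.I) • (H * (U x * Λ x * (U x)ᴴ) - U x * Λ x * (U x)ᴴ * H)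
        + U x * Λ' * (U x)ᴴ) x := by
  have hderiv : (-Complex.I) • (H * (U x * Λ x * (U x)ᴴ) - U x * Λ x * (U x)ᴴ * H)
        + U x * Λ' * (U x)ᴴ
      = ((-Complex.I) • (H * U x) * Λ x + U x * Λ') * (U x)ᴴ
        + U x * Λ x * ((-Complex.I) • (H * U x))ᴴ := by
    simp only [conjTranspose_smul, conjTranspose_mul, hH, star_neg, Complex.star_def,
      Complex.conj_I, neg_neg, Matrix.add_mul, Matrix.smul_mul, Matrix.mul_smul, Matrix.mul_assoc]
    module
  rw [hderiv]
  exact (hU.mul hΛ).mul hU.conjTranspose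

end Matrix

theorem stmt_14_general {N : ℕ}
    (ℛ : Matrix (Fin N) (Fin N) ℂ →ₗ[ℂ] Matrix (Fin N) (Fin N) ℂ)
    (H ρ U Λ Λ' H' : ℝ → Matrix (Fin N) (Fin N) ℂ)
    (hdiag : ∀ t, (Λ t).IsDiag)
    (huni : ∀ t, U t * (U t)ᴴ = 1 ∧ (U t)ᴴ * U t = 1)
    (hρ : ∀ t, ρ t = U t * Λ t * (U t)ᴴ)
    (hH' : ∀ t, (H' t)ᴴ = H' t)
    (hU' : ∀ t i j, HasDerivAt (fun s => U s i j)
      (((-Complex.I) • (H' t * U t)) i j) t)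
    (hΛ' : ∀ t i j, HasDerivAt (fun s => Λ s i j) (Λ' t i j) t)
    (hLind : ∀ t i j, HasDerivAt (fun s => ρ s i j)
      (((-Complex.I) • (H t * ρ t - ρ t * H t) + ℛ (ρ t)) i j) t) :
    ∀ t k, Λ' t k k = ((U t)ᴴ * ℛ (U t * Λ t * (U t)ᴴ) * U t) k k := by
  intro t k
  have hUU : (U t)ᴴ * U t = 1 := (huni t).2
  have hρ_fun : ρ = fun s => U s * Λ s * (U s)ᴴ := funext hρ
  have hρ_deriv : HasEntrywiseDerivAt ρ
      ((-Complex.I) • (H' t * ρ t - ρ t * H' t) + U t * Λ' t * (U t)ᴴ) t := by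
    rw [hρ_fun]
    exact HasEntrywiseDerivAt.conj_of_hamiltonian (hU' t) (hH' t) (hΛ' t)
  have hdiag_conj : ∀ A X : Matrix (Fin N) (Fin N) ℂ,
      ((U t)ᴴ * ((-Complex.I) • (A * ρ t - ρ t * A) + X) * U t) k k
      = ((U t)ᴴ * X * U t) k k := fun A X => by
    rw [Matrix.mul_add, Matrix.add_mul, Matrix.mul_smul, Matrix.smul_mul, Matrix.add_apply,
      Matrix.smul_apply, hρ, (hdiag t).conjTranspose_mul_commutator_mul_apply_self hUU, smul_zero,
      zero_add]
  calc Λ' t k k = ((U t)ᴴ * (U t * Λ' t * (U t)ᴴ) * U t) k k := by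
        rw [← Matrix.mul_assoc, ← Matrix.mul_assoc, hUU, Matrix.one_mul, Matrix.mul_assoc, hUU,
          Matrix.mul_one]
    _ = ((U t)ᴴ * ℛ (ρ t) * U t) k k := by
        rw [← hdiag_conj (H' t), hρ_deriv.unique (hLind t), hdiag_conj]
    _ = ((U t)ᴴ * ℛ (U t * Λ t * (U t)ᴴ) * U t) k k := by rw [hρ]

/-- Diagonalization of the Lindblad dynamics: if `ρ(t) = U(t) Λ(t) U(t)†` with `Λ(t)`
diagonal, `U(t)` unitary with Hermitian generator `H'(t)` (i.e. `U' = -i H' U`), `H(t)`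
Hermitian, and `ρ' = -i[H, ρ] + ℛ(ρ)`, then the diagonal entries of `Λ'` are the diagonal
entries of `U† ℛ(U Λ U†) U`. -/
theorem stmt_14 {N : ℕ}
    (ℛ : Matrix (Fin N) (Fin N) ℂ →ₗ[ℂ] Matrix (Fin N) (Fin N) ℂ)
    (H ρ U Λ Λ' H' : ℝ → Matrix (Fin N) (Fin N) ℂ)
    (hdiag : ∀ t, (Λ t).IsDiag)
    (huni : ∀ t, U t * (U t)ᴴ = 1 ∧ (U t)ᴴ * U t = 1)
    (hρ : ∀ t, ρ t = U t * Λ t * (U t)ᴴ)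
    (hH' : ∀ t, (H' t)ᴴ = H' t)
    (hU' : ∀ t i j, HasDerivAt (fun s => U s i j)
      (((-Complex.I) • (H' t * U t)) i j) t)
    (hΛ' : ∀ t i j, HasDerivAt (fun s => Λ s i j) (Λ' t i j) t)
    (hH : ∀ t, (H t)ᴴ = H t)
    (hLind : ∀ t i j, HasDerivAt (fun s => ρ s i j)
      (((-Complex.I) • (H t * ρ t - ρ t * H t) + ℛ (ρ t)) i j) t) :
    ∀ t k, Λ' t k k = ((U t)ᴴ * ℛ (U t * Λ t * (U t)ᴴ) * U t) k k :=
  stmt_14_general ℛ H ρ U Λ Λ' H' hdiag huni hρ hH' hU' hΛ' hLind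
end
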